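/- Let U be a non-decreasing right-continuous function on ℝ with U(x) = 0 for all x < 0 and U(x) → ∞ as x → ∞, and suppose log U is regularly varying of index β ∈ (0,1) at ∞. Then for every r > 0, −log ∫_{(x,∞)} e^{−ry} dU(y) ~ r x as x → ∞. -/

import Mathlib

/-!
Write `I(x) = ∫_{(x,∞)} e^{-ry} dU(y)`. For `s > r` put `c = s / r > 1`; restricting to
`(x, cx]` gives `I(x) ≥ e^{-sx} (U(cx) - U(x))`, and the increment is eventually `≥ 1` because
`log U(cx) / log U(x) → c^β > 1` while `log U → ∞`. For `s < r`, on `(x,∞)` we have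
`e^{-ry} ≤ e^{-(r-t)x} e^{-ty}` with `t = (r - s) / 2`, so
`I(x) ≤ e^{-(r-t)x} ∫_{(0,∞)} e^{-ty} dU(y)`, and this last integral is finite because `β < 1`
forces `log U(y) = o(y)`: with `β < γ < 1`, eventually `log U(2x) ≤ 2^γ log U(x)`, whence
`log U(y) = O(y^γ)` by monotonicity. Hence `e^{-sx} ≤ I(x) ≤ e^{-s'x}` eventually for all
`s' < r < s`.
-/

open Filter MeasureTheory Real Set

/-- `l` is slowly varying at `∞` (`l ∈ R₀`). -/
def SlowlyVarying (l : ℝ → ℝ) : Prop :=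
  (∀ᶠ x in atTop, 0 < l x) ∧
  ∀ c : ℝ, 0 < c → Tendsto (fun x => l (c * x) / l x) atTop (nhds 1)

/-- `f` is regularly varying of index `α` at `∞` (`f ∈ R_α`): `f x = x^α l(x)` for a
slowly varying `l`. -/
def RegularlyVarying (α : ℝ) (f : ℝ → ℝ) : Prop :=
  ∃ l : ℝ → ℝ, SlowlyVarying l ∧ ∀ᶠ x in atTop, f x = x ^ α * l x

open Asymptotics Topology
open scoped ENNReal

namespace RegularlyVarying

variable {α : ℝ} {f : ℝ → ℝ}

theorem eventually_pos (hf : RegularlyVarying α f) : ∀ᶠ x in atTop, 0 < f x := by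
  obtain ⟨l, ⟨hl_pos, -⟩, hf⟩ := hf
  filter_upwards [hf, hl_pos, eventually_gt_atTop 0] with x hfx hlx hx
  rw [hfx]
  exact mul_pos (rpow_pos_of_pos hx α) hlx

theorem tendsto_comp_mul_div {c : ℝ} (hf : RegularlyVarying α f) (hc : 0 < c) :
    Tendsto (fun x => f (c * x) / f x) atTop (𝓝 (c ^ α)) := by
  obtain ⟨l, ⟨hl_pos, hl⟩, hf⟩ := hf
  have hcx : Tendsto (fun x => c * x) atTop atTop := tendsto_id.const_mul_atTop hc
  have hlim := (hl c hc).const_mul (c ^ α)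
  rw [mul_one] at hlim
  refine hlim.congr' ?_
  filter_upwards [hf, hcx.eventually hf, hl_pos, eventually_gt_atTop 0] with x hfx hfcx hlx hx
  rw [hfx, hfcx, mul_rpow hc.le hx.le]
  have := (rpow_pos_of_pos hx α).ne'
  field_simp

end RegularlyVarying

theorem MonotoneOn.exists_le_mul_rpow_of_le_two_rpow_mul {g : ℝ → ℝ} {x₀ γ : ℝ} (hx₀ : 0 < x₀)
    (hγ : 0 ≤ γ) (hmono : MonotoneOn g (Ici x₀))
    (hdouble : ∀ x, x₀ ≤ x → g (2 * x) ≤ 2 ^ γ * g x) :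
    ∃ K, ∀ y, x₀ ≤ y → g y ≤ K * y ^ γ := by
  set K := max (g (2 * x₀)) 0 / x₀ ^ γ
  have hK : 0 ≤ K := by positivity
  have hsmall : ∀ y, x₀ ≤ y → y ≤ 2 * x₀ → g y ≤ K * y ^ γ := fun y hy hy₂ =>
    calc g y ≤ g (2 * x₀) := hmono hy (by simp only [mem_Ici]; linarith) hy₂
      _ ≤ K * x₀ ^ γ := by
        rw [div_mul_cancel₀ _ (rpow_pos_of_pos hx₀ γ).ne']
        exact le_max_left _ _
      _ ≤ K * y ^ γ := by gcongr
  have hdyadic : ∀ n : ℕ, ∀ y, x₀ ≤ y → y ≤ 2 ^ n * x₀ → g y ≤ K * y ^ γ := by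
    intro n
    induction n with
    | zero => exact fun y hy hy₀ => hsmall y hy (by linarith)
    | succ n ih =>
      intro y hy hyn
      rcases le_or_gt y (2 * x₀) with hy₂ | hy₂
      · exact hsmall y hy hy₂
      calc g y = g (2 * (y / 2)) := by rw [mul_div_cancel₀ y two_ne_zero]
        _ ≤ 2 ^ γ * g (y / 2) := hdouble _ (by linarith)
        _ ≤ 2 ^ γ * (K * (y / 2) ^ γ) := by
          gcongr
          exact ih _ (by linarith) (by rw [pow_succ] at hyn; linarith)
        _ = K * y ^ γ := by
          rw [div_rpow (by linarith) zero_le_two]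
          field_simp
  refine ⟨K, fun y hy => ?_⟩
  obtain ⟨n, hn⟩ := pow_unbounded_of_one_lt (y / x₀) one_lt_two
  exact hdyadic n y hy ((div_lt_iff₀ hx₀).1 hn).le

theorem isLittleO_rpow_id_atTop {γ : ℝ} (hγ : γ < 1) : (fun y : ℝ => y ^ γ) =o[atTop] id := by
  refine (isLittleO_iff_tendsto' ?_).2 ?_
  · filter_upwards [eventually_gt_atTop 0] with y hy h
    exact absurd h hy.ne'
  · refine (tendsto_rpow_neg_atTop (sub_pos.2 hγ)).congr' ?_
    filter_upwards [eventually_gt_atTop 0] with y hy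
    rw [neg_sub, rpow_sub_one hy.ne', id]

theorem RegularlyVarying.isLittleO_id {α : ℝ} {f : ℝ → ℝ} (hf : RegularlyVarying α f)
    (hα : α < 1) (hmono : ∃ x₀, MonotoneOn f (Ici x₀)) : f =o[atTop] id := by
  obtain ⟨γ, hγ, hγ₁⟩ := exists_between (max_lt hα one_pos)
  obtain ⟨hαγ, hγ₀⟩ := max_lt_iff.1 hγ
  have hratio : ∀ᶠ x in atTop, f (2 * x) / f x < 2 ^ γ :=
    (hf.tendsto_comp_mul_div two_pos).eventually_lt_const
      ((rpow_lt_rpow_left_iff one_lt_two).2 hαγ)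
  obtain ⟨x₀, hf_mono⟩ := hmono
  obtain ⟨x₁, hx₁⟩ := eventually_atTop.1
    ((hratio.and hf.eventually_pos).and (eventually_ge_atTop (max x₀ 1)))
  have hx₁₀ : max x₀ 1 ≤ x₁ := (hx₁ x₁ le_rfl).2
  obtain ⟨K, hK⟩ := (hf_mono.mono (Ici_subset_Ici.2 ((le_max_left _ _).trans hx₁₀))
    ).exists_le_mul_rpow_of_le_two_rpow_mul (by linarith [le_max_right x₀ 1]) hγ₀.le
    (fun x hx => ((div_lt_iff₀ (hx₁ x hx).1.2).1 (hx₁ x hx).1.1).le)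
  refine IsBigO.trans_isLittleO (IsBigO.of_bound K ?_) (isLittleO_rpow_id_atTop hγ₁)
  filter_upwards [eventually_ge_atTop x₁] with y hy
  have hy₀ : 0 < y := by linarith [le_max_right x₀ 1]
  rw [norm_of_nonneg (hx₁ y hy).1.2.le, norm_of_nonneg (rpow_nonneg hy₀.le γ)]
  exact hK y hy

theorem tendsto_sub_atTop_of_tendsto_div {ι : Type*} {l : Filter ι} {f g : ι → ℝ} {L : ℝ}
    (hg : Tendsto g l atTop) (hL : 1 < L) (hfg : Tendsto (fun x => f x / g x) l (𝓝 L)) :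
    Tendsto (fun x => f x - g x) l atTop := by
  refine (hg.atTop_mul_pos (sub_pos.2 hL) (hfg.sub_const 1)).congr' ?_
  filter_upwards [hg.eventually_gt_atTop 0] with x hx
  field_simp

theorem Monotone.exists_sub_le_mul_exp {u : ℝ → ℝ} (hu : Monotone u) {a : ℝ} (ha : 0 ≤ a)
    (hexp : ∀ᶠ y in atTop, u y ≤ exp (a * y)) :
    ∃ C, ∀ y, 0 ≤ y → u y - u 0 ≤ C * exp (a * y) := by
  obtain ⟨y₀, hy₀⟩ := eventually_atTop.1 hexp
  refine ⟨|u y₀| + |u 0| + 1, fun y hy => ?_⟩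
  have hexp₁ : 1 ≤ exp (a * y) := one_le_exp (mul_nonneg ha hy)
  have hu₀ := neg_abs_le (u 0)
  rcases le_total y₀ y with hy₀y | hyy₀
  · nlinarith [hy₀ y hy₀y, abs_nonneg (u y₀), abs_nonneg (u 0)]
  · calc u y - u 0 ≤ |u y₀| + |u 0| + 1 := by linarith [hu hyy₀, le_abs_self (u y₀)]
      _ ≤ (|u y₀| + |u 0| + 1) * exp (a * y) := le_mul_of_one_le_right (by positivity) hexp₁

theorem Ioi_zero_eq_iUnion_Ioc_natCast : Ioi (0 : ℝ) = ⋃ n : ℕ, Ioc (n : ℝ) (n + 1) := by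
  simpa using (iUnion_Ioc_map_succ_eq_Ioi (f := fun n : ℕ => (n : ℝ)) (fun n => by simp)
    (by simpa [bddAbove_def] using fun x => exists_nat_gt x)).symm

namespace StieltjesFunction

variable (U : StieltjesFunction ℝ)

theorem lintegral_Ioi_zero_exp_lt_top {a s C : ℝ} (ha : 0 ≤ a) (has : a < s)
    (hU : ∀ y, 0 ≤ y → U y - U 0 ≤ C * exp (a * y)) :
    ∫⁻ y in Ioi 0, ENNReal.ofReal (exp (-(s * y))) ∂U.measure < ⊤ := by
  have hC : 0 ≤ C := by simpa using hU 0 le_rfl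
  have hpiece : ∀ n : ℕ, ∫⁻ y in Ioc (n : ℝ) (n + 1), ENNReal.ofReal (exp (-(s * y))) ∂U.measure
      ≤ ENNReal.ofReal (C * exp a) * ENNReal.ofReal (exp (a - s)) ^ n := by
    intro n
    have hgrowth : U (n + 1) - U n ≤ C * exp (a * (n + 1)) := by
      linarith [hU (n + 1) (by positivity), U.mono (Nat.cast_nonneg n : (0 : ℝ) ≤ n)]
    calc ∫⁻ y in Ioc (n : ℝ) (n + 1), ENNReal.ofReal (exp (-(s * y))) ∂U.measure
        ≤ ∫⁻ _ in Ioc (n : ℝ) (n + 1), ENNReal.ofReal (exp (-(s * n))) ∂U.measure :=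
          setLIntegral_mono measurable_const fun y hy =>
            ENNReal.ofReal_le_ofReal (exp_le_exp.2 (by nlinarith [hy.1]))
      _ = ENNReal.ofReal (exp (-(s * n)) * (U (n + 1) - U n)) := by
          rw [setLIntegral_const, measure_Ioc, ENNReal.ofReal_mul (exp_nonneg _)]
      _ ≤ ENNReal.ofReal (exp (-(s * n)) * (C * exp (a * (n + 1)))) := by gcongr
      _ = ENNReal.ofReal (C * exp a) * ENNReal.ofReal (exp (a - s)) ^ n := by
          rw [← ENNReal.ofReal_pow (exp_nonneg _), ← ENNReal.ofReal_mul (by positivity),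
            ← exp_nat_mul, mul_assoc, ← exp_add, mul_left_comm, ← exp_add]
          congr 3
          ring
  calc ∫⁻ y in Ioi 0, ENNReal.ofReal (exp (-(s * y))) ∂U.measure
      ≤ ∑' n : ℕ, ∫⁻ y in Ioc (n : ℝ) (n + 1), ENNReal.ofReal (exp (-(s * y))) ∂U.measure := by
        rw [Ioi_zero_eq_iUnion_Ioc_natCast]
        exact lintegral_iUnion_le _ _
    _ ≤ ∑' n : ℕ, ENNReal.ofReal (C * exp a) * ENNReal.ofReal (exp (a - s)) ^ n :=
        ENNReal.tsum_le_tsum hpiece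
    _ = ENNReal.ofReal (C * exp a) * (1 - ENNReal.ofReal (exp (a - s)))⁻¹ := by
        rw [ENNReal.tsum_mul_left, ENNReal.tsum_geometric]
    _ < ⊤ := ENNReal.mul_lt_top ENNReal.ofReal_lt_top <| ENNReal.inv_lt_top.2 <| tsub_pos_of_lt <|
        ENNReal.ofReal_lt_one.2 <| exp_lt_one_iff.2 (by linarith)

theorem eventually_lintegral_Ioi_exp_le {r s t : ℝ} (hs : 0 ≤ s) (hst : s + t < r)
    (hJ : ∫⁻ y in Ioi 0, ENNReal.ofReal (exp (-(t * y))) ∂U.measure < ⊤) :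
    ∀ᶠ x in atTop, ∫⁻ y in Ioi x, ENNReal.ofReal (exp (-(r * y))) ∂U.measure
      ≤ ENNReal.ofReal (exp (-(s * x))) := by
  set J := ∫⁻ y in Ioi 0, ENNReal.ofReal (exp (-(t * y))) ∂U.measure
  have hexp : Tendsto (fun x => exp ((r - t - s) * x)) atTop atTop :=
    tendsto_exp_atTop.comp (tendsto_id.const_mul_atTop (by linarith))
  filter_upwards [hexp.eventually_ge_atTop J.toReal, eventually_ge_atTop 0] with x hJx hx
  calc ∫⁻ y in Ioi x, ENNReal.ofReal (exp (-(r * y))) ∂U.measure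
      ≤ ∫⁻ y in Ioi x, ENNReal.ofReal (exp (-((r - t) * x))) *
          ENNReal.ofReal (exp (-(t * y))) ∂U.measure :=
        setLIntegral_mono (by fun_prop) fun y hy => by
          rw [← ENNReal.ofReal_mul (exp_nonneg _), ← exp_add]
          exact ENNReal.ofReal_le_ofReal (exp_le_exp.2 (by nlinarith [mem_Ioi.1 hy]))
    _ = ENNReal.ofReal (exp (-((r - t) * x))) *
          ∫⁻ y in Ioi x, ENNReal.ofReal (exp (-(t * y))) ∂U.measure :=
        lintegral_const_mul _ (by fun_prop)
    _ ≤ ENNReal.ofReal (exp (-((r - t) * x))) * ENNReal.ofReal J.toReal := by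
        rw [ENNReal.ofReal_toReal hJ.ne]
        gcongr
        exact lintegral_mono_set (Ioi_subset_Ioi hx)
    _ ≤ ENNReal.ofReal (exp (-((r - t) * x)) * exp ((r - t - s) * x)) := by
        rw [← ENNReal.ofReal_mul (exp_nonneg _)]
        gcongr
    _ = ENNReal.ofReal (exp (-(s * x))) := by
        rw [← exp_add]
        ring_nf

theorem eventually_ofReal_exp_le_lintegral_Ioi {r c : ℝ} (hr : 0 ≤ r)
    (hgap : ∀ᶠ x in atTop, 1 ≤ U (c * x) - U x) :
    ∀ᶠ x in atTop, ENNReal.ofReal (exp (-(r * c * x)))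
      ≤ ∫⁻ y in Ioi x, ENNReal.ofReal (exp (-(r * y))) ∂U.measure := by
  filter_upwards [hgap] with x hx
  calc ENNReal.ofReal (exp (-(r * c * x)))
      ≤ ENNReal.ofReal (exp (-(r * c * x))) * U.measure (Ioc x (c * x)) := by
        rw [measure_Ioc]
        exact le_mul_of_one_le_right' (ENNReal.one_le_ofReal.2 hx)
    _ = ∫⁻ _ in Ioc x (c * x), ENNReal.ofReal (exp (-(r * c * x))) ∂U.measure :=
        (setLIntegral_const _ _).symm
    _ ≤ ∫⁻ y in Ioc x (c * x), ENNReal.ofReal (exp (-(r * y))) ∂U.measure :=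
        setLIntegral_mono (by fun_prop) fun y hy =>
          ENNReal.ofReal_le_ofReal (exp_le_exp.2 (by nlinarith [hy.2]))
    _ ≤ ∫⁻ y in Ioi x, ENNReal.ofReal (exp (-(r * y))) ∂U.measure :=
        lintegral_mono_set Ioc_subset_Ioi_self

end StieltjesFunction

theorem tendsto_neg_log_toReal_div_of_exp_bounds {F : ℝ → ℝ≥0∞} {r : ℝ} (hr : 0 < r)
    (hup : ∀ s, 0 ≤ s → s < r → ∀ᶠ x in atTop, F x ≤ ENNReal.ofReal (exp (-(s * x))))
    (hlow : ∀ s, r < s → ∀ᶠ x in atTop, ENNReal.ofReal (exp (-(s * x))) ≤ F x) :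
    Tendsto (fun x => -log (F x).toReal / (r * x)) atTop (𝓝 1) := by
  have hbounds : ∀ s, 0 ≤ s → s < r → ∀ s', r < s' →
      ∀ᶠ x in atTop, s * x ≤ -log (F x).toReal ∧ -log (F x).toReal ≤ s' * x := by
    intro s hs hsr s' hs'
    filter_upwards [hup s hs hsr, hlow s' hs'] with x hFup hFlow
    have hF : F x ≠ ⊤ := ne_top_of_le_ne_top ENNReal.ofReal_ne_top hFup
    have hFlow' := (ENNReal.ofReal_le_iff_le_toReal hF).1 hFlow
    have hFpos : 0 < (F x).toReal := (exp_pos _).trans_le hFlow'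
    constructor
    · linarith [(log_le_iff_le_exp hFpos).2 (ENNReal.toReal_le_of_le_ofReal (exp_nonneg _) hFup)]
    · linarith [(le_log_iff_exp_le hFpos).2 hFlow']
  refine tendsto_order.2 ⟨fun a ha => ?_, fun b hb => ?_⟩
  · obtain ⟨s, hs, hsr⟩ := exists_between (max_lt (mul_lt_of_lt_one_left hr ha) hr)
    filter_upwards [hbounds s (le_max_right _ _ |>.trans hs.le) hsr (2 * r) (by linarith),
      eventually_gt_atTop 0] with x hx hx₀
    rw [lt_div_iff₀ (by positivity)]
    nlinarith [le_max_left (a * r) 0]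
  · obtain ⟨s, hrs, hsb⟩ := exists_between (lt_mul_of_one_lt_left hr hb)
    filter_upwards [hbounds 0 le_rfl hr s hrs, eventually_gt_atTop 0] with x hx hx₀
    rw [div_lt_iff₀ (by positivity)]
    nlinarith

section LogRegularlyVarying

variable {U : StieltjesFunction ℝ} {β : ℝ}

theorem eventually_le_exp_mul_of_log_regularlyVarying (hUtop : Tendsto U atTop atTop)
    (hreg : RegularlyVarying β fun x => log (U x)) (hβ : β < 1) {a : ℝ} (ha : 0 < a) :
    ∀ᶠ y in atTop, U y ≤ exp (a * y) := by
  obtain ⟨x₀, hx₀⟩ := eventually_atTop.1 (hUtop.eventually_gt_atTop 0)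
  have hmono : MonotoneOn (fun x => log (U x)) (Ici x₀) := fun x hx y _ hxy =>
    log_le_log (hx₀ x hx) (U.mono hxy)
  filter_upwards [(hreg.isLittleO_id hβ ⟨x₀, hmono⟩).bound ha, hUtop.eventually_gt_atTop 0,
    eventually_ge_atTop 0] with y hlog hUy hy
  rw [norm_eq_abs, norm_eq_abs, id, abs_of_nonneg hy] at hlog
  rw [← exp_log hUy]
  exact exp_le_exp.2 ((le_abs_self _).trans hlog)

theorem lintegral_Ioi_zero_exp_lt_top_of_log_regularlyVarying (hUtop : Tendsto U atTop atTop)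
    (hreg : RegularlyVarying β fun x => log (U x)) (hβ : β < 1) {t : ℝ} (ht : 0 < t) :
    ∫⁻ y in Ioi 0, ENNReal.ofReal (exp (-(t * y))) ∂U.measure < ⊤ := by
  obtain ⟨C, hC⟩ := U.mono.exists_sub_le_mul_exp (half_pos ht).le
    (eventually_le_exp_mul_of_log_regularlyVarying hUtop hreg hβ (half_pos ht))
  exact U.lintegral_Ioi_zero_exp_lt_top (half_pos ht).le (half_lt_self ht) hC

theorem eventually_one_le_sub_of_log_regularlyVarying (hUtop : Tendsto U atTop atTop)
    (hreg : RegularlyVarying β fun x => log (U x)) (hβ : 0 < β) {c : ℝ} (hc : 1 < c) :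
    ∀ᶠ x in atTop, 1 ≤ U (c * x) - U x := by
  have hlog : Tendsto (fun x => log (U x)) atTop atTop := tendsto_log_atTop.comp hUtop
  have hgap := tendsto_sub_atTop_of_tendsto_div hlog (one_lt_rpow hc hβ)
    (hreg.tendsto_comp_mul_div (by linarith))
  filter_upwards [hgap.eventually_ge_atTop (log 2), hUtop.eventually_ge_atTop 1,
    eventually_ge_atTop 0] with x hx hUx hx₀
  have hUcx : 0 < U (c * x) := by linarith [U.mono (le_mul_of_one_le_left hx₀ hc.le)]
  have hdouble : 2 * U x ≤ U (c * x) := by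
    rw [← exp_log (by linarith : 0 < U x), ← exp_log hUcx, ← exp_log two_pos, ← exp_add]
    exact exp_le_exp.2 (by linarith)
  linarith

end LogRegularlyVarying

theorem neg_log_stieltjes_integral_of_log_regularlyVarying_general
    (U : StieltjesFunction ℝ)
    (hUtop : Tendsto U atTop atTop)
    (β : ℝ) (hβ : β ∈ Set.Ioo (0 : ℝ) 1)
    (hreg : RegularlyVarying β (fun x => Real.log (U x))) :
    ∀ r : ℝ, 0 < r →
      Tendsto (fun x =>
          -Real.log ((∫⁻ y in Set.Ioi x,
              ENNReal.ofReal (Real.exp (-(r * y))) ∂U.measure).toReal) / (r * x))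
        atTop (nhds 1) := by
  intro r hr
  refine tendsto_neg_log_toReal_div_of_exp_bounds hr (fun s hs hsr => ?_) (fun s hrs => ?_)
  · have ht : 0 < (r - s) / 2 := by linarith
    exact U.eventually_lintegral_Ioi_exp_le hs (by linarith)
      (lintegral_Ioi_zero_exp_lt_top_of_log_regularlyVarying hUtop hreg hβ.2 ht)
  · have hgap := eventually_one_le_sub_of_log_regularlyVarying hUtop hreg hβ.1
      ((one_lt_div hr).2 hrs)
    simpa only [mul_div_cancel₀ s hr.ne'] using U.eventually_ofReal_exp_le_lintegral_Ioi hr.le hgap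

/-- Let `U` be non-decreasing right-continuous, vanishing on `(-∞,0)`,
with `U(x) → ∞`, and suppose `log U` is regularly varying of index `β ∈ (0,1)` at `∞`.
Then for every `r > 0`, `-log ∫_{(x,∞)} e^{-r y} dU(y) ~ r x` as `x → ∞`. -/
theorem neg_log_stieltjes_integral_of_log_regularlyVarying
    (U : StieltjesFunction ℝ) (hU0 : ∀ x < 0, U x = 0)
    (hUtop : Tendsto U atTop atTop)
    (β : ℝ) (hβ : β ∈ Set.Ioo (0 : ℝ) 1)
    (hreg : RegularlyVarying β (fun x => Real.log (U x))) :
    ∀ r : ℝ, 0 < r →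
      Tendsto (fun x =>
          -Real.log ((∫⁻ y in Set.Ioi x,
              ENNReal.ofReal (Real.exp (-(r * y))) ∂U.measure).toReal) / (r * x))
        atTop (nhds 1) :=
  neg_log_stieltjes_integral_of_log_regularlyVarying_general U hUtop β hβ hreg
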